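/- Let ρ be a density matrix with eigenvalues λ₀ ≥ λ₁ ≥ ... ≥ λ_{N-1}, and let ρ' be the density matrix obtained by replacing each eigenvalue in a block of Δ consecutive eigenvalues (in the same eigenbasis) by the average value of that block. Then ‖ρ - ρ'‖₁ ≤ λ₀ · Δ, where λ₀ = λ_max(ρ) is the largest eigenvalue. -/

import Mathlib

open scoped ComplexOrder Matrix

open Classical in
/-- Square root of a positive semidefinite matrix (junk value `0` otherwise). -/
noncomputable def msqrt {n : Type*} [Fintype n] [DecidableEq n] (A : Matrix n n ℂ) :
    Matrix n n ℂ :=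
  if h : A.PosSemidef then
    (h.1.eigenvectorUnitary : Matrix n n ℂ) *
      Matrix.diagonal ((↑) ∘ Real.sqrt ∘ h.1.eigenvalues) *
      (star h.1.eigenvectorUnitary : Matrix n n ℂ)
  else 0

/-- Trace norm `‖A‖₁ = Tr √(Aᴴ A)`. -/
noncomputable def traceNorm {n : Type*} [Fintype n] [DecidableEq n] (A : Matrix n n ℂ) : ℝ :=
  (msqrt (Aᴴ * A)).trace.re

lemma traceNorm_diagonal_real {n : Type*} [Fintype n] [DecidableEq n] (d : n → ℝ) :
    traceNorm (Matrix.diagonal fun i => (d i : ℂ)) = ∑ i, |d i| := by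
  have hct : (Matrix.diagonal fun i => (d i : ℂ))ᴴ = Matrix.diagonal fun i => (d i : ℂ) := by
    rw [Matrix.diagonal_conjTranspose]
    congr 1
    funext i
    simp [Pi.star_def, Complex.conj_ofReal]
  have hmul : (Matrix.diagonal fun i => (d i : ℂ))ᴴ * (Matrix.diagonal fun i => (d i : ℂ))
      = Matrix.diagonal fun i => ((d i ^ 2 : ℝ) : ℂ) := by
    rw [hct, Matrix.diagonal_mul_diagonal]
    congr 1
    funext i
    push_cast
    ring
  have hpsd : (Matrix.diagonal fun i => ((d i ^ 2 : ℝ) : ℂ)).PosSemidef :=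
    Matrix.PosSemidef.diagonal fun i => by positivity
  have hpsd2 : (Matrix.diagonal fun i => ((|d i| : ℝ) : ℂ)).PosSemidef :=
    Matrix.PosSemidef.diagonal fun i => by positivity
  have hsq : (Matrix.diagonal fun i => ((|d i| : ℝ) : ℂ)) ^ 2
      = Matrix.diagonal fun i => ((d i ^ 2 : ℝ) : ℂ) := by
    have hf : (fun i => ((|d i| : ℝ) : ℂ) * ((|d i| : ℝ) : ℂ)) = fun i => ((d i ^ 2 : ℝ) : ℂ) := by
      funext i
      rw [← Complex.ofReal_mul, ← abs_mul, abs_mul_self, ← pow_two]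
    rw [pow_two, Matrix.diagonal_mul_diagonal, hf]
  have hsqrt : msqrt ((Matrix.diagonal fun i => (d i : ℂ))ᴴ * (Matrix.diagonal fun i => (d i : ℂ)))
      = Matrix.diagonal fun i => ((|d i| : ℝ) : ℂ) := by
    rw [hmul, msqrt, dif_pos hpsd]
    have key : cfc Real.sqrt (Matrix.diagonal fun i => ((d i ^ 2 : ℝ) : ℂ))
        = Matrix.diagonal fun i => ((|d i| : ℝ) : ℂ) := by
      have hB : (Matrix.diagonal fun i => ((|d i| : ℝ) : ℂ)).IsHermitian := hpsd2.1
      have h2 : (Matrix.diagonal fun i => ((|d i| : ℝ) : ℂ)) ^ 2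
          = cfc (fun x : ℝ => x ^ 2) (Matrix.diagonal fun i => ((|d i| : ℝ) : ℂ)) := by
        rw [cfc_pow (fun x : ℝ => x) 2 (Matrix.diagonal fun i => ((|d i| : ℝ) : ℂ)),
          cfc_id' ℝ (Matrix.diagonal fun i => ((|d i| : ℝ) : ℂ))]
      rw [← hsq, h2, ← cfc_comp' Real.sqrt (fun x : ℝ => x ^ 2) (ha := hB.isSelfAdjoint)]
      have hc : cfc (fun x : ℝ => Real.sqrt (x ^ 2)) (Matrix.diagonal fun i => ((|d i| : ℝ) : ℂ))
          = cfc (fun x : ℝ => x) (Matrix.diagonal fun i => ((|d i| : ℝ) : ℂ)) := by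
        apply cfc_congr
        intro x hx
        rw [hB.spectrum_real_eq_range_eigenvalues] at hx
        obtain ⟨i, rfl⟩ := hx
        exact Real.sqrt_sq (hpsd2.eigenvalues_nonneg i)
      rw [hc, cfc_id' ℝ _ hB.isSelfAdjoint]
    rw [← key, Matrix.IsHermitian.cfc_eq hpsd.1 Real.sqrt, Matrix.IsHermitian.cfc,
      Unitary.conjStarAlgAut_apply]
    rfl
  rw [traceNorm, hsqrt, Matrix.trace_diagonal]
  push_cast
  simp

/-- Block-averaging the (decreasingly ordered) spectrum of a density matrix in blocks of
size `Δ` (the eigenvalue at index `(k, m)` is the `(kΔ + m)`-th one) moves the state by at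
most `λ_max · Δ` in trace norm.  Both matrices are expressed in their common eigenbasis,
where they are diagonal. -/
theorem traceNorm_block_average_le
    (K Δ : ℕ) (hK : 0 < K) (hΔ : 0 < Δ)
    (lam : Fin K × Fin Δ → ℝ)
    (hdec : ∀ p q : Fin K × Fin Δ,
      (p.1 < q.1 ∨ (p.1 = q.1 ∧ p.2 ≤ q.2)) → lam q ≤ lam p)
    (hnn : ∀ p, 0 ≤ lam p) (hsum : ∑ p, lam p = 1)
    (lam' : Fin K × Fin Δ → ℝ)
    (hlam' : ∀ p, lam' p = (∑ m : Fin Δ, lam (p.1, m)) / Δ) :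
    traceNorm ((Matrix.diagonal fun p => (lam p : ℂ))
        - Matrix.diagonal fun p => (lam' p : ℂ))
      ≤ lam (⟨0, hK⟩, ⟨0, hΔ⟩) * Δ := by
  have hdiag : (Matrix.diagonal fun p => (lam p : ℂ))
      - (Matrix.diagonal fun p => (lam' p : ℂ))
      = Matrix.diagonal fun p => ((lam p - lam' p : ℝ) : ℂ) := by
    rw [Matrix.diagonal_sub]
    congr 1
    funext p
    push_cast
    ring
  rw [hdiag, traceNorm_diagonal_real]
  -- notation
  set lst : Fin Δ := ⟨Δ - 1, Nat.sub_lt hΔ one_pos⟩ with hlst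
  have hm_le : ∀ (k : Fin K) (m : Fin Δ), lam (k, lst) ≤ lam (k, m) ∧ lam (k, m) ≤ lam (k, ⟨0, hΔ⟩) := by
    intro k m
    constructor
    · exact hdec (k, m) (k, lst) (Or.inr ⟨rfl, by simp [hlst, Fin.le_def, Nat.le_sub_one_of_lt m.2]⟩)
    · exact hdec (k, ⟨0, hΔ⟩) (k, m) (Or.inr ⟨rfl, by simp [Fin.le_def]⟩)
  -- avg bounds
  have havg : ∀ k : Fin K, lam (k, lst) ≤ lam' (k, ⟨0, hΔ⟩) ∧ lam' (k, ⟨0, hΔ⟩) ≤ lam (k, ⟨0, hΔ⟩) := by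
    intro k
    rw [hlam']
    constructor
    · rw [le_div_iff₀ (by exact_mod_cast hΔ)]
      calc lam (k, lst) * (Δ : ℝ) = ∑ _m : Fin Δ, lam (k, lst) := by
            simp [mul_comm]
        _ ≤ ∑ m : Fin Δ, lam (k, m) := Finset.sum_le_sum fun m _ => (hm_le k m).1
    · rw [div_le_iff₀ (by exact_mod_cast hΔ)]
      calc ∑ m : Fin Δ, lam (k, m) ≤ ∑ _m : Fin Δ, lam (k, ⟨0, hΔ⟩) :=
            Finset.sum_le_sum fun m _ => (hm_le k m).2
        _ = lam (k, ⟨0, hΔ⟩) * (Δ : ℝ) := by simp [mul_comm]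
  have havg' : ∀ k : Fin K, ∀ m : Fin Δ, lam' (k, m) = lam' (k, ⟨0, hΔ⟩) := by
    intro k m; rw [hlam', hlam']
  -- pointwise bound
  have hpt : ∀ (k : Fin K) (m : Fin Δ),
      |lam (k, m) - lam' (k, m)| ≤ lam (k, ⟨0, hΔ⟩) - lam (k, lst) := by
    intro k m
    rw [havg' k m, abs_sub_le_iff]
    constructor
    · linarith [(hm_le k m).2, (havg k).1]
    · linarith [(hm_le k m).1, (havg k).2]
  -- sum over blocks
  have hsum1 : ∑ p : Fin K × Fin Δ, |lam p - lam' p|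
      ≤ ∑ k : Fin K, (Δ : ℝ) * (lam (k, ⟨0, hΔ⟩) - lam (k, lst)) := by
    rw [Fintype.sum_prod_type]
    refine Finset.sum_le_sum fun k _ => ?_
    calc ∑ m : Fin Δ, |lam (k, m) - lam' (k, m)|
        ≤ ∑ _m : Fin Δ, (lam (k, ⟨0, hΔ⟩) - lam (k, lst)) :=
          Finset.sum_le_sum fun m _ => hpt k m
      _ = (Δ : ℝ) * (lam (k, ⟨0, hΔ⟩) - lam (k, lst)) := by simp; ring
  -- telescoping bound: ∑ k (top k - bot k) ≤ top 0
  classical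
  set F : ℕ → ℝ := fun k => if h : k < K then lam (⟨k, h⟩, ⟨0, hΔ⟩) else 0 with hF
  set G : ℕ → ℝ := fun k => if h : k < K then lam (⟨k, h⟩, lst) else 0 with hG
  have hFG : ∀ k, F (k + 1) ≤ G k := by
    intro k
    by_cases h : k < K
    · by_cases h1 : k + 1 < K
      · simp only [hF, hG, dif_pos h, dif_pos h1]
        exact hdec (⟨k, h⟩, lst) (⟨k + 1, h1⟩, ⟨0, hΔ⟩) (Or.inl (by simp [Fin.lt_def]))
      · simp only [hF, hG, dif_pos h, dif_neg h1]
        exact hnn _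
    · have h1 : ¬ (k + 1 < K) := fun hc => h (Nat.lt_of_succ_lt hc)
      simp [hF, hG, dif_neg h, dif_neg h1]
  have htel : ∑ k : Fin K, (lam (k, ⟨0, hΔ⟩) - lam (k, lst)) ≤ lam (⟨0, hK⟩, ⟨0, hΔ⟩) := by
    have h1 : ∑ k : Fin K, (lam (k, ⟨0, hΔ⟩) - lam (k, lst))
        = ∑ k ∈ Finset.range K, (F k - G k) := by
      rw [Finset.sum_range fun k => _]
      apply Finset.sum_congr rfl
      intro k _
      simp [hF, hG, k.2]
    rw [h1]
    calc ∑ k ∈ Finset.range K, (F k - G k)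
        ≤ ∑ k ∈ Finset.range K, (F k - F (k + 1)) :=
          Finset.sum_le_sum fun k _ => by linarith [hFG k]
      _ = F 0 - F K := Finset.sum_range_sub' F K
      _ = lam (⟨0, hK⟩, ⟨0, hΔ⟩) := by simp [hF, hK]
  calc ∑ p : Fin K × Fin Δ, |lam p - lam' p|
      ≤ ∑ k : Fin K, (Δ : ℝ) * (lam (k, ⟨0, hΔ⟩) - lam (k, lst)) := hsum1
    _ = (Δ : ℝ) * ∑ k : Fin K, (lam (k, ⟨0, hΔ⟩) - lam (k, lst)) := by
        rw [Finset.mul_sum]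
    _ ≤ (Δ : ℝ) * lam (⟨0, hK⟩, ⟨0, hΔ⟩) := by
        have := htel
        have hΔ0 : (0 : ℝ) ≤ Δ := by positivity
        nlinarith
    _ = lam (⟨0, hK⟩, ⟨0, hΔ⟩) * Δ := mul_comm _ _
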